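/- The net system of the synchronization pattern with n clients weakly terminates: from every marking reachable from the initial marking {i} + Σ_{j=1..n} {i_j}, the final marking {i} + Σ_{j=1..n} {r_j} is reachable. -/

import Mathlib

namespace PortNets

/-- Direction of communication of a transition: send, receive, or internal (τ). -/
inductive Dir : Type
  | send | receive | tau
deriving DecidableEq

/-- Preset of a node `x` with respect to a flow relation `F`. -/
def pre {Node : Type} (F : Set (Node × Node)) (x : Node) : Set Node := {y | (y, x) ∈ F}

/-- Postset of a node `x` with respect to a flow relation `F`. -/
def post {Node : Type} (F : Set (Node × Node)) (x : Node) : Set Node := {y | (x, y) ∈ F}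

/-- Raw data of an open Petri net (with labels): internal places `P`, input places `I`,
output places `O`, transitions `T`, flow `F`, initial and final places, labeling `μ`. -/
structure OPN (Node L : Type) where
  P : Set Node
  I : Set Node
  O : Set Node
  T : Set Node
  F : Set (Node × Node)
  init : Set Node
  fin : Set Node
  μ : Node → L

variable {Node L : Type}

/-- All places of an OPN. -/
def OPN.places (N : OPN Node L) : Set Node := N.P ∪ N.I ∪ N.O

/-- All nodes of an OPN. -/
def OPN.nodes (N : OPN Node L) : Set Node := N.places ∪ N.T

/-- Structural requirements of an open Petri net. -/
structure IsOPN (N : OPN Node L) : Prop where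
  disjPI : N.P ∩ N.I = ∅
  disjPO : N.P ∩ N.O = ∅
  disjIO : N.I ∩ N.O = ∅
  disjPT : N.places ∩ N.T = ∅
  flow_sub : N.F ⊆ (N.places ×ˢ N.T) ∪ (N.T ×ˢ N.places)
  no_pre_I : ∀ x ∈ N.I, pre N.F x = ∅
  no_post_O : ∀ x ∈ N.O, post N.F x = ∅
  not_both : ∀ t ∈ N.T, ¬((pre N.F t ∩ N.I).Nonempty ∧ (post N.F t ∩ N.O).Nonempty)
  init_sub : N.init ⊆ N.P
  fin_sub : N.fin ⊆ N.P

open Classical in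
noncomputable def dir (N : OPN Node L) (t : Node) : Dir :=
  if (post N.F t ∩ N.O).Nonempty then Dir.send
  else if (pre N.F t ∩ N.I).Nonempty then Dir.receive
  else Dir.tau

open Classical in
noncomputable def fireAt (F : Set (Node × Node)) (m : Node → ℕ) (t : Node) : Node → ℕ :=
  fun p => m p - (if (p, t) ∈ F then 1 else 0) + (if (t, p) ∈ F then 1 else 0)

/-- `Fires T F m t m'`: transition `t` is enabled in marking `m` and firing it yields `m'`. -/
def Fires (T : Set Node) (F : Set (Node × Node)) (m : Node → ℕ) (t : Node)
    (m' : Node → ℕ) : Prop :=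
  t ∈ T ∧ (∀ p, (p, t) ∈ F → 1 ≤ m p) ∧ m' = fireAt F m t

/-- Firing a finite sequence of transitions. -/
inductive FireSeq (T : Set Node) (F : Set (Node × Node)) :
    (Node → ℕ) → List Node → (Node → ℕ) → Prop
  | nil (m : Node → ℕ) : FireSeq T F m [] m
  | cons {m m' m'' : Node → ℕ} {t : Node} {σ : List Node} :
      Fires T F m t m' → FireSeq T F m' σ m'' → FireSeq T F m (t :: σ) m''

/-- Reachability of markings. -/
def Reach (T : Set Node) (F : Set (Node × Node)) (m m' : Node → ℕ) : Prop :=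
  ∃ σ : List Node, FireSeq T F m σ m'

/-- Weak termination: from every marking reachable from `m0`, the marking `mf` is reachable. -/
def WeaklyTerminates (T : Set Node) (F : Set (Node × Node)) (m0 mf : Node → ℕ) : Prop :=
  ∀ m, Reach T F m0 m → Reach T F m mf

/-- The marking putting one token on each element of a set of places. -/
noncomputable def mark (s : Set Node) : Node → ℕ := s.indicator fun _ => 1

/-- Flow relation of the skeleton: all arcs not adjacent to interface places. -/
def skF (N : OPN Node L) : Set (Node × Node) :=
  {x ∈ N.F | x.1 ∉ N.I ∪ N.O ∧ x.2 ∉ N.I ∪ N.O}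

/-- The skeleton is a state machine: each transition has at most one place in its
preset and at most one in its postset. -/
def IsSM (N : OPN Node L) : Prop :=
  ∀ t ∈ N.T, (pre (skF N) t).Subsingleton ∧ (post (skF N) t).Subsingleton

/-- `x` lies on a path from `i` to `f` w.r.t. flow `F`. -/
def OnPath (F : Set (Node × Node)) (i f x : Node) : Prop :=
  ∃ l : List Node, l ≠ [] ∧ List.Chain' (fun a b => (a, b) ∈ F) l ∧
    l.head? = some i ∧ l.getLast? = some f ∧ x ∈ l

/-- Workflow net (with places `P`, transitions `T`, flow `F`): `i` is the unique place with
empty preset, `f` the unique place with empty postset, and every node is on a path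
from `i` to `f`. -/
def IsWFNOn (P T : Set Node) (F : Set (Node × Node)) (i f : Node) : Prop :=
  i ∈ P ∧ f ∈ P ∧ pre F i = ∅ ∧ post F f = ∅ ∧
    (∀ p ∈ P, pre F p = ∅ → p = i) ∧
    (∀ p ∈ P, post F p = ∅ → p = f) ∧
    (∀ x ∈ P ∪ T, OnPath F i f x)

/-- Transition `t` is connected (by an arc, in either direction) to node `x`. -/
def connected (N : OPN Node L) (t x : Node) : Prop := (x, t) ∈ N.F ∨ (t, x) ∈ N.F

/-- A labeled portnet: an OPN whose skeleton is a state-machine workflow net, with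
singleton `init` and `fin`, every transition connected to exactly one interface place,
transitions sharing an interface place sharing a label, and transitions sharing a
label sharing their interface place connections. -/
structure IsPortnet (N : OPN Node L) : Prop where
  isOPN : IsOPN N
  isSM : IsSM N
  init_single : ∃ i, N.init = {i}
  fin_single : ∃ f, N.fin = {f}
  isWFN : ∀ i f, N.init = {i} → N.fin = {f} → IsWFNOn N.P N.T (skF N) i f
  one_iface : ∀ t ∈ N.T, ∃! x, x ∈ N.I ∪ N.O ∧ connected N t x
  same_iface_label : ∀ x ∈ N.I ∪ N.O, ∀ t t', t ∈ N.T → t' ∈ N.T →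
    connected N t x → connected N t' x → N.μ t = N.μ t'
  same_label_iface : ∀ t ∈ N.T, ∀ t' ∈ N.T, N.μ t = N.μ t' →
    ∀ x ∈ N.I ∪ N.O, (connected N t x ↔ connected N t' x)

/-- Observable choices: distinct transitions in the postset of a place have distinct labels. -/
def ObservableChoices (N : OPN Node L) : Prop :=
  ∀ p ∈ N.P, ∀ t ∈ post N.F p, ∀ t' ∈ post N.F p, t ≠ t' → N.μ t ≠ N.μ t'

/-- Choice property: all transitions in the postset of a place have the same direction. -/
def ChoiceProp (N : OPN Node L) : Prop :=
  ∀ p ∈ N.P, ∀ t ∈ post N.F p, ∀ t' ∈ post N.F p, dir N t = dir N t'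

/-- Diamond property. -/
def DiamondProp (N : OPN Node L) : Prop :=
  ∀ p ∈ N.P, ∀ t ∈ post N.F p, ∀ t' ∈ post N.F p, dir N t ≠ dir N t' →
    ∀ q ∈ post (skF N) t, ∀ q' ∈ post (skF N) t',
      ∃ u ∈ post (skF N) q, ∃ u' ∈ post (skF N) q',
        (post (skF N) u ∩ post (skF N) u').Nonempty ∧
        N.μ t = N.μ u' ∧ N.μ t' = N.μ u

/-- Loop property. -/
def LoopProp (N : OPN Node L) : Prop :=
  ∀ p ∈ N.P, ∀ t ∈ post N.F p, ∀ t' ∈ post N.F p, t ≠ t' → dir N t = dir N t' →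
    ∀ (l : List Node) (t'' : Node),
      List.Chain' (fun a b => (a, b) ∈ N.F) (p :: t :: (l ++ [t''])) →
      t'' ∈ N.T → N.μ t'' = N.μ t' →
      (∀ u ∈ l, u ∈ N.T → N.μ u ≠ N.μ t') →
      ∃ v ∈ t :: (l ++ [t'']), v ∈ N.T ∧ dir N v ≠ dir N t

/-- Well-formed labeled portnet. -/
def WellFormed (N : OPN Node L) : Prop :=
  IsPortnet N ∧ ObservableChoices N ∧ DiamondProp N ∧ LoopProp N

/-- `(M, φ)` is a partial mirror of the labeled portnet `N`. -/
structure IsPartialMirror (N M : OPN Node L) (φ : Node → Node) : Prop where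
  portN : IsPortnet N
  portM : IsPortnet M
  inj : Set.InjOn φ M.nodes
  mapsP : ∀ x ∈ M.P, φ x ∈ N.P
  mapsT : ∀ x ∈ M.T, φ x ∈ N.T
  mapsI : ∀ x ∈ M.I, φ x ∈ N.O
  mapsO : ∀ x ∈ M.O, φ x ∈ N.I
  flow_same : ∀ x y, (x, y) ∈ M.F → x ∉ M.I → y ∉ M.O → (φ x, φ y) ∈ N.F
  flow_rev : ∀ x y, (x, y) ∈ M.F → (x ∈ M.I ∨ y ∈ M.O) → (φ y, φ x) ∈ N.F
  init_eq : φ '' M.init = N.init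
  fin_eq : φ '' M.fin = N.fin
  lab : ∀ t ∈ M.T, M.μ t = N.μ (φ t)
  send_cover : ∀ p ∈ M.P, ∀ t, (φ p, t) ∈ N.F → dir N t = Dir.send →
    ∃ t', (p, t') ∈ M.F ∧ φ t' = t

/-- Composability of two OPNs. -/
def Composable (N M : OPN Node L) : Prop :=
  (N.nodes ∩ M.nodes = (N.I ∪ N.O) ∩ (M.I ∪ M.O)) ∧
  (((N.I ∩ M.O) ∪ (M.I ∩ N.O)).Nonempty →
    N.O ⊆ M.I ∧ M.O ⊆ N.I ∧ N.I ∩ M.I = ∅ ∧ N.O ∩ M.O = ∅)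

open Classical in
noncomputable def compose2 (N M : OPN Node L) : OPN Node L where
  P := N.P ∪ M.P ∪ ((N.I ∪ M.I) ∩ (N.O ∪ M.O))
  I := (N.I ∪ M.I) \ (N.O ∪ M.O)
  O := (N.O ∪ M.O) \ (N.I ∪ M.I)
  T := N.T ∪ M.T
  F := N.F ∪ M.F
  init := N.init ∪ M.init
  fin := N.fin ∪ M.fin
  μ := fun x => if x ∈ N.T then N.μ x else M.μ x

end PortNets

namespace PortNets

/-- Nodes of the synchronization pattern net with `n` clients: server places
`pi, pp, pq, pr`, interface places `pa1, pa2, pa3`, client places `pic j, ppc j, pqc j,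
prc j`, server transitions `tu, tv, tw, tt`, and client transitions `tuc j, tvc j, twc j`. -/
inductive SPNode (n : ℕ) : Type
  | pi | pp | pq | pr
  | pa1 | pa2 | pa3
  | pic (j : Fin n) | ppc (j : Fin n) | pqc (j : Fin n) | prc (j : Fin n)
  | tu | tv | tw | tt
  | tuc (j : Fin n) | tvc (j : Fin n) | twc (j : Fin n)
deriving DecidableEq

/-- Transitions of the synchronization pattern net. -/
def spT (n : ℕ) : Set (SPNode n) :=
  {x | x = SPNode.tu ∨ x = SPNode.tv ∨ x = SPNode.tw ∨ x = SPNode.tt ∨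
       ∃ j, x = SPNode.tuc j ∨ x = SPNode.tvc j ∨ x = SPNode.twc j}

/-- Flow relation of the synchronization pattern net: `•u = {i, a1}`, `u• = {p}`;
`•v = {p}`, `v• = {q, a2}`; `•w = {q, a3}`, `w• = {r}`; `•t = {r}`, `t• = {i}`;
`•u_j = {i_j}`, `u_j• = {p_j, a1}`; `•v_j = {p_j, a2}`, `v_j• = {q_j}`;
`•w_j = {q_j}`, `w_j• = {r_j, a3}`. -/
def spF (n : ℕ) : Set (SPNode n × SPNode n) :=
  {x | x = (SPNode.pi, SPNode.tu) ∨ x = (SPNode.pa1, SPNode.tu) ∨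
       x = (SPNode.tu, SPNode.pp) ∨
       x = (SPNode.pp, SPNode.tv) ∨ x = (SPNode.tv, SPNode.pq) ∨
       x = (SPNode.tv, SPNode.pa2) ∨
       x = (SPNode.pq, SPNode.tw) ∨ x = (SPNode.pa3, SPNode.tw) ∨
       x = (SPNode.tw, SPNode.pr) ∨
       x = (SPNode.pr, SPNode.tt) ∨ x = (SPNode.tt, SPNode.pi) ∨
       ∃ j, x = (SPNode.pic j, SPNode.tuc j) ∨ x = (SPNode.tuc j, SPNode.ppc j) ∨
            x = (SPNode.tuc j, SPNode.pa1) ∨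
            x = (SPNode.ppc j, SPNode.tvc j) ∨ x = (SPNode.pa2, SPNode.tvc j) ∨
            x = (SPNode.tvc j, SPNode.pqc j) ∨
            x = (SPNode.pqc j, SPNode.twc j) ∨ x = (SPNode.twc j, SPNode.prc j) ∨
            x = (SPNode.twc j, SPNode.pa3)}

/-- Initial marking `{i} + Σ_j {i_j}` of the synchronization pattern net. -/
noncomputable def spM0 (n : ℕ) : SPNode n → ℕ :=
  mark ({SPNode.pi} ∪ Set.range SPNode.pic)

/-- Final marking `{i} + Σ_j {r_j}` of the synchronization pattern net. -/
noncomputable def spMf (n : ℕ) : SPNode n → ℕ :=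
  mark ({SPNode.pi} ∪ Set.range SPNode.prc)

/-- The five place invariants of the synchronization pattern (Lemma on place invariants);
the fifth equation is over the integers. -/
def SPInv (n : ℕ) (m : SPNode n → ℕ) : Prop :=
  (m SPNode.pi + m SPNode.pp + m SPNode.pq + m SPNode.pr = 1) ∧
  (∀ j : Fin n, m (SPNode.pic j) + m (SPNode.ppc j) + m (SPNode.pqc j) + m (SPNode.prc j) = 1) ∧
  (∑ j : Fin n, m (SPNode.ppc j) = m SPNode.pa1 + m SPNode.pp + m SPNode.pa2) ∧
  ((∑ j : Fin n, m (SPNode.pqc j)) + m SPNode.pa2 ≤ 1) ∧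
  (m SPNode.pa2 + m SPNode.pa3 ≤ 1 ∧
    (m SPNode.pa2 : ℤ) + (m SPNode.pa3 : ℤ) =
      (m SPNode.pq : ℤ) - ∑ j : Fin n, (m (SPNode.pqc j) : ℤ))

end PortNets

/-!
Four linear place invariants hold in every reachable marking: the server holds one token on
`i, p, q, r`, each client one token on `i_j, p_j, q_j, r_j`, `Σ p_j = a₁ + p + a₂`, and
`a₂ + a₃ + Σ q_j = q`. The weighting `4p + 3q + r + 5a₁ + 5a₃ + Σ (13 i_j + 7 p_j + 6 q_j)`
drops with every firing, so every run is finite, and it remains to see that a dead marking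
obeying the invariants is final. There `p`, `r`, `i_j`, `q_j` are empty (else `v`, `t`, `u_j`,
`w_j` fire); `a₂` is empty, since it would enable some `v_j` as `Σ p_j ≥ a₂`; hence `q = a₃` is
empty (else `w` fires), the server is at `i`, `a₁` is empty (else `u` fires), so all `p_j` are
empty and every client is at `r_j`.
-/

namespace PortNets

section Firing

variable {Node : Type} {T : Set Node} {F : Set (Node × Node)}

open Classical in
noncomputable def incidence (F : Set (Node × Node)) (t : Node) : Node → ℤ :=
  fun p => (if (t, p) ∈ F then 1 else 0) - (if (p, t) ∈ F then 1 else 0)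

abbrev tokensAt (p : Node) : (Node → ℤ) →+ ℤ := Pi.evalAddMonoidHom (fun _ => ℤ) p

theorem Fires.natCast_comp {m m' : Node → ℕ} {t : Node} (h : Fires T F m t m') :
    ((↑) ∘ m' : Node → ℤ) = (↑) ∘ m + incidence F t := by
  obtain ⟨-, hen, rfl⟩ := h
  funext p
  simp only [Function.comp_apply, Pi.add_apply, fireAt, incidence]
  split_ifs with hpt <;> (try have := hen p hpt) <;> omega

theorem Fires.map_natCast_comp {m m' : Node → ℕ} {t : Node} (h : Fires T F m t m')
    (I : (Node → ℤ) →+ ℤ) : I ((↑) ∘ m') = I ((↑) ∘ m) + I (incidence F t) := by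
  rw [h.natCast_comp, map_add]

theorem FireSeq.preserves {P : (Node → ℕ) → Prop}
    (hP : ∀ m t m', Fires T F m t m' → P m → P m') {m m' : Node → ℕ} {σ : List Node}
    (h : FireSeq T F m σ m') (hm : P m) : P m' := by
  induction h with
  | nil => exact hm
  | cons hf _ ih => exact ih (hP _ _ _ hf hm)

theorem reach_of_rank {P : (Node → ℕ) → Prop} {mf : Node → ℕ} (rank : (Node → ℤ) →+ ℤ)
    (hrank_nonneg : ∀ m : Node → ℕ, 0 ≤ rank ((↑) ∘ m))
    (hrank : ∀ t ∈ T, rank (incidence F t) < 0)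
    (hP : ∀ m t m', Fires T F m t m' → P m → P m')
    (hprog : ∀ m, P m → m ≠ mf → ∃ t m', Fires T F m t m') {m : Node → ℕ} (hm : P m) :
    Reach T F m mf := by
  induction hk : (rank ((↑) ∘ m)).toNat using Nat.strong_induction_on generalizing m with
  | _ k ih =>
  by_cases hmf : m = mf
  · exact ⟨[], hmf ▸ .nil m⟩
  obtain ⟨t, m', hf⟩ := hprog m hm hmf
  have hstep := hf.map_natCast_comp rank
  have hdrop := hrank t hf.1
  have hnonneg := hrank_nonneg m'
  obtain ⟨σ, hσ⟩ := ih (rank ((↑) ∘ m')).toNat (by omega) (hP _ _ _ hf hm) rfl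
  exact ⟨t :: σ, .cons hf hσ⟩

theorem weaklyTerminates_of_rank {m0 mf : Node → ℕ} (P : (Node → ℕ) → Prop)
    (rank : (Node → ℤ) →+ ℤ) (hrank_nonneg : ∀ m : Node → ℕ, 0 ≤ rank ((↑) ∘ m))
    (hrank : ∀ t ∈ T, rank (incidence F t) < 0) (h0 : P m0)
    (hP : ∀ m t m', Fires T F m t m' → P m → P m')
    (hprog : ∀ m, P m → m ≠ mf → ∃ t m', Fires T F m t m') :
    WeaklyTerminates T F m0 mf := fun _ ⟨_, hσ⟩ =>
  reach_of_rank rank hrank_nonneg hrank hP hprog (hσ.preserves hP h0)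

end Firing

section SynchronizationPattern

variable {n : ℕ}

noncomputable def serverInvariant (n : ℕ) : (SPNode n → ℤ) →+ ℤ :=
  tokensAt .pi + tokensAt .pp + tokensAt .pq + tokensAt .pr

noncomputable def clientInvariant (j : Fin n) : (SPNode n → ℤ) →+ ℤ :=
  tokensAt (.pic j) + tokensAt (.ppc j) + tokensAt (.pqc j) + tokensAt (.prc j)

noncomputable def requestInvariant (n : ℕ) : (SPNode n → ℤ) →+ ℤ :=
  ∑ j, tokensAt (.ppc j) - tokensAt .pa1 - tokensAt .pp - tokensAt .pa2

noncomputable def syncInvariant (n : ℕ) : (SPNode n → ℤ) →+ ℤ :=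
  tokensAt .pa2 + tokensAt .pa3 + ∑ j, tokensAt (.pqc j) - tokensAt .pq

noncomputable def spRank (n : ℕ) : (SPNode n → ℤ) →+ ℤ :=
  4 • tokensAt .pp + 3 • tokensAt .pq + tokensAt .pr + 5 • tokensAt .pa1 + 5 • tokensAt .pa3 +
    ∑ j, (13 • tokensAt (.pic j) + 7 • tokensAt (.ppc j) + 6 • tokensAt (.pqc j))

theorem spInv_iff_invariants (m : SPNode n → ℕ) :
    SPInv n m ↔ serverInvariant n ((↑) ∘ m) = 1 ∧ (∀ j, clientInvariant j ((↑) ∘ m) = 1) ∧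
      requestInvariant n ((↑) ∘ m) = 0 ∧ syncInvariant n ((↑) ∘ m) = 0 := by
  simp only [SPInv, serverInvariant, clientInvariant, requestInvariant, syncInvariant,
    AddMonoidHom.add_apply, AddMonoidHom.sub_apply, AddMonoidHom.finsetSum_apply,
    Pi.evalAddMonoidHom_apply, Function.comp_apply]
  have hp : ((∑ j, m (.ppc j) : ℕ) : ℤ) = ∑ j, (m (.ppc j) : ℤ) := by push_cast; rfl
  have hq : ((∑ j, m (.pqc j) : ℕ) : ℤ) = ∑ j, (m (.pqc j) : ℤ) := by push_cast; rfl
  constructor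
  · rintro ⟨h1, h2, h3, -, -, h6⟩
    exact ⟨by omega, fun j => by have := h2 j; omega, by omega, by omega⟩
  · rintro ⟨h1, h2, h3, h4⟩
    exact ⟨by omega, fun j => by have := h2 j; omega, by omega, by omega, by omega, by omega⟩

theorem invariants_incidence_eq_zero {t : SPNode n} (ht : t ∈ spT n) :
    serverInvariant n (incidence (spF n) t) = 0 ∧
      (∀ j, clientInvariant j (incidence (spF n) t) = 0) ∧
      requestInvariant n (incidence (spF n) t) = 0 ∧
      syncInvariant n (incidence (spF n) t) = 0 := by
  rcases ht with rfl | rfl | rfl | rfl | ⟨j, rfl | rfl | rfl⟩ <;>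
    simp [serverInvariant, clientInvariant, requestInvariant, syncInvariant, incidence, spF,
      @eq_comm (Fin n)]

theorem SPInv.of_fires {m m' : SPNode n → ℕ} {t : SPNode n} (hI : SPInv n m)
    (h : Fires (spT n) (spF n) m t m') : SPInv n m' := by
  obtain ⟨h1, h2, h3, h4⟩ := invariants_incidence_eq_zero h.1
  rw [spInv_iff_invariants] at hI ⊢
  simpa only [h.map_natCast_comp, h1, h2, h3, h4, add_zero] using hI

theorem spInv_spM0 (n : ℕ) : SPInv n (spM0 n) := by
  simp [SPInv, spM0, mark]

theorem spRank_nonneg (m : SPNode n → ℕ) : 0 ≤ spRank n ((↑) ∘ m) := by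
  simp only [spRank, AddMonoidHom.add_apply, AddMonoidHom.smul_apply, Pi.evalAddMonoidHom_apply,
    Function.comp_apply, AddMonoidHom.finsetSum_apply]
  positivity

theorem spRank_incidence_neg {t : SPNode n} (ht : t ∈ spT n) :
    spRank n (incidence (spF n) t) < 0 := by
  rcases ht with rfl | rfl | rfl | rfl | ⟨j, rfl | rfl | rfl⟩ <;>
    simp [spRank, incidence, spF, @eq_comm (Fin n), Finset.sum_add_distrib]

theorem incidence_apply_of_mem_spT {t x : SPNode n} (ht : t ∈ spT n) (hx : x ∈ spT n) :
    incidence (spF n) t x = 0 := by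
  rcases ht with rfl | rfl | rfl | rfl | ⟨j, rfl | rfl | rfl⟩ <;>
  rcases hx with rfl | rfl | rfl | rfl | ⟨j', rfl | rfl | rfl⟩ <;>
    simp [incidence, spF]

theorem Fires.apply_eq_zero_of_mem_spT {m m' : SPNode n → ℕ} {t : SPNode n}
    (h : Fires (spT n) (spF n) m t m') (hz : ∀ x ∈ spT n, m x = 0) :
    ∀ x ∈ spT n, m' x = 0 := by
  intro x hx
  have := congrFun h.natCast_comp x
  simp only [Function.comp_apply, Pi.add_apply, incidence_apply_of_mem_spT h.1 hx, hz x hx]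
    at this
  omega

theorem spM0_apply_of_mem_spT {x : SPNode n} (hx : x ∈ spT n) : spM0 n x = 0 := by
  rcases hx with rfl | rfl | rfl | rfl | ⟨j, rfl | rfl | rfl⟩ <;> simp [spM0, mark]

theorem spMf_apply_of_mem_spT {x : SPNode n} (hx : x ∈ spT n) : spMf n x = 0 := by
  rcases hx with rfl | rfl | rfl | rfl | ⟨j, rfl | rfl | rfl⟩ <;> simp [spMf, mark]

theorem eq_spMf_of_dead {m : SPNode n → ℕ} (hI : SPInv n m) (hz : ∀ x ∈ spT n, m x = 0)
    (hdead : ∀ t ∈ spT n, ∃ p, (p, t) ∈ spF n ∧ m p = 0) : m = spMf n := by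
  obtain ⟨h1, h2, h3, -, -, h5⟩ := hI
  have hpp : m .pp = 0 := by
    obtain ⟨p, hp, h0⟩ := hdead .tv (by simp [spT])
    obtain rfl : p = .pp := by simpa [spF] using hp
    exact h0
  have hpr : m .pr = 0 := by
    obtain ⟨p, hp, h0⟩ := hdead .tt (by simp [spT])
    obtain rfl : p = .pr := by simpa [spF] using hp
    exact h0
  have hpic (j) : m (.pic j) = 0 := by
    obtain ⟨p, hp, h0⟩ := hdead (.tuc j) (by simp [spT])
    obtain rfl : p = .pic j := by simpa [spF] using hp
    exact h0
  have hpqc (j) : m (.pqc j) = 0 := by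
    obtain ⟨p, hp, h0⟩ := hdead (.twc j) (by simp [spT])
    obtain rfl : p = .pqc j := by simpa [spF] using hp
    exact h0
  have htu : m .pi = 0 ∨ m .pa1 = 0 := by
    obtain ⟨p, hp, h0⟩ := hdead .tu (by simp [spT])
    obtain rfl | rfl : p = .pi ∨ p = .pa1 := by simpa [spF] using hp
    exacts [.inl h0, .inr h0]
  have htw : m .pq = 0 ∨ m .pa3 = 0 := by
    obtain ⟨p, hp, h0⟩ := hdead .tw (by simp [spT])
    obtain rfl | rfl : p = .pq ∨ p = .pa3 := by simpa [spF] using hp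
    exacts [.inl h0, .inr h0]
  have htvc (j) : m (.ppc j) = 0 ∨ m .pa2 = 0 := by
    obtain ⟨p, hp, h0⟩ := hdead (.tvc j) (by simp [spT])
    obtain rfl | rfl : p = .ppc j ∨ p = .pa2 := by simpa [spF, ← or_and_right] using hp
    exacts [.inl h0, .inr h0]
  have hpa2 : m .pa2 = 0 := by
    by_contra hne
    have : ∑ j, m (.ppc j) = 0 := Finset.sum_eq_zero fun j _ => (htvc j).resolve_right hne
    omega
  simp only [hpqc, Nat.cast_zero, Finset.sum_const_zero] at h5
  have hpq : m .pq = 0 := by omega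
  have hpa3 : m .pa3 = 0 := by omega
  have hpi : m .pi = 1 := by omega
  have hpa1 : m .pa1 = 0 := by omega
  have hppc (j) : m (.ppc j) = 0 :=
    Finset.sum_eq_zero_iff.1 (show ∑ j, m (.ppc j) = 0 by omega) j (Finset.mem_univ j)
  have hprc (j) : m (.prc j) = 1 := by simpa [hpic, hppc, hpqc] using h2 j
  funext x
  by_cases hx : x ∈ spT n
  · rw [hz x hx, spMf_apply_of_mem_spT hx]
  · cases x <;> simp [spT, spMf, mark, *] at hx ⊢

theorem exists_fires_of_ne_spMf {m : SPNode n → ℕ} (hI : SPInv n m)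
    (hz : ∀ x ∈ spT n, m x = 0) (hne : m ≠ spMf n) : ∃ t m', Fires (spT n) (spF n) m t m' := by
  by_contra! hstuck
  refine hne (eq_spMf_of_dead hI hz fun t ht => ?_)
  by_contra! hpos
  exact hstuck t _ ⟨ht, fun p hp => Nat.one_le_iff_ne_zero.2 (hpos p hp), rfl⟩

end SynchronizationPattern

/-- the net system of the synchronization pattern with `n` clients weakly
terminates: from every marking reachable from the initial marking `{i} + Σ_j {i_j}`,
the final marking `{i} + Σ_j {r_j}` is reachable. -/
theorem sp_weakly_terminates (n : ℕ) :
    WeaklyTerminates (spT n) (spF n) (spM0 n) (spMf n) :=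
  weaklyTerminates_of_rank
    -- markings are functions on all nodes; the transition nodes must stay empty
    (fun m => SPInv n m ∧ ∀ x ∈ spT n, m x = 0) (spRank n)
    spRank_nonneg (fun _ => spRank_incidence_neg) ⟨spInv_spM0 n, fun _ => spM0_apply_of_mem_spT⟩
    (fun _ _ _ hf ⟨hI, hz⟩ => ⟨hI.of_fires hf, hf.apply_eq_zero_of_mem_spT hz⟩)
    (fun _ ⟨hI, hz⟩ => exists_fires_of_ne_spMf hI hz)

end PortNets
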